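/- Let O_E be the ring of integers of a number field E, let 𝒜 ⊆ ℳ be O_E-orders of full rank in a semisimple E-algebra A, and let X, Y be locally free 𝒜-lattices of the same rank d inside the same E-vector space V with Y ⊆ X. If ℳY = ℳX (as sublattices of V), then Y = X. -/

import Mathlib

/-!
Fix a nonzero prime `𝔭` and `𝒜_𝔭`-bases `α` of `X_𝔭` and `β` of `Y_𝔭`. Since `Y ⊆ X` we have
`β = C α` with `C` over `𝒜_𝔭`, and since `ℳY = ℳX` we have `α = B β` with `B` over `ℳ_𝔭`. As `𝒜`
spans `A`, the family `α` is linearly independent over all of `A`, so `B C = 1`. Right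
multiplication by `C` is then a surjective endomorphism of the finitely generated `𝓞_𝔭`-module
`ℳ_𝔭ᵈ` which preserves `𝒜_𝔭ᵈ`, so it induces a surjective, hence injective (Orzech), endomorphism
of `ℳ_𝔭ᵈ / 𝒜_𝔭ᵈ`. It sends every row of `B` into `𝒜_𝔭ᵈ`, so `B` has entries in `𝒜_𝔭` and
`X_𝔭 ⊆ Y_𝔭`. This holds at every maximal ideal, hence `X ⊆ Y`.
-/

open scoped NumberField

section

variable (E : Type*) [Field E] [NumberField E]
variable (A : Type*) [Ring A] [Algebra E A]

/-- The ring of integers of `E` acts on any `E`-algebra `A`. -/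
noncomputable instance algebraOEA : Algebra (𝓞 E) A :=
  RingHom.toAlgebra' ((algebraMap E A).comp (algebraMap (𝓞 E) E))
    (fun c x => by
      simpa only [RingHom.comp_apply] using (Algebra.commutes (algebraMap (𝓞 E) E c) x))

variable (V : Type*) [AddCommGroup V] [Module E V] [Module A V] [IsScalarTower E A V]

/-- The ring of integers of `E` acts on any `E`-vector space. -/
noncomputable instance (priority := 50) moduleOEV {E : Type*} [Field E] [NumberField E]
    (W : Type*) [AddCommGroup W] [Module E W] : Module (𝓞 E) W :=
  Module.compHom W (algebraMap (𝓞 E) E)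

variable {E A V}

/-- An `𝓞 E`-order of full rank in `A`: a subalgebra which is a finitely generated
`𝓞 E`-module spanning `A` over `E`. -/
def IsOrder (𝒜 : Subalgebra (𝓞 E) A) : Prop :=
  (Subalgebra.toSubmodule 𝒜).FG ∧ Submodule.span E (𝒜 : Set A) = ⊤

/-- A maximal `𝓞 E`-order in `A`. -/
def IsMaximalOrder (ℳ : Subalgebra (𝓞 E) A) : Prop :=
  IsOrder ℳ ∧ ∀ ℳ' : Subalgebra (𝓞 E) A, IsOrder ℳ' → ℳ ≤ ℳ' → ℳ' = ℳ

/-- An `𝒜`-lattice: an `𝓞 E`-submodule of an `A`-module `V` which is finitely generated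
and torsion-free over `𝓞 E` and stable under the order `𝒜`. -/
def IsALattice (𝒜 : Subalgebra (𝓞 E) A) (X : Submodule (𝓞 E) V) : Prop :=
  X.FG ∧ (∀ (r : 𝓞 E) (x : V), x ∈ X → r • x = 0 → r = 0 ∨ x = 0) ∧
    ∀ a ∈ 𝒜, ∀ x ∈ X, a • x ∈ X

/-- `α : Fin d → V` is a free basis of the set `Y ⊆ V` over the set of scalars `S ⊆ A`,
i.e. `Y = S•α 1 ⊕ ⋯ ⊕ S•α d` with the summands free. -/
def IsBasisOf {d : ℕ} (S : Set A) (Y : Set V) (α : Fin d → V) : Prop :=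
  (∀ lam : Fin d → A, (∀ i, lam i ∈ S) → ∑ i, lam i • α i ∈ Y) ∧
  (∀ y ∈ Y, ∃ lam : Fin d → A, (∀ i, lam i ∈ S) ∧ y = ∑ i, lam i • α i) ∧
  (∀ lam : Fin d → A, (∀ i, lam i ∈ S) → ∑ i, lam i • α i = 0 → ∀ i, lam i = 0)

/-- `Y` is a free module of rank `d` over the set of scalars `S ⊆ A`. -/
def IsFreeOfRank (S : Set A) (Y : Set V) (d : ℕ) : Prop :=
  ∃ α : Fin d → V, (∀ i, α i ∈ Y) ∧ IsBasisOf S Y α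

/-- Localization at the prime `𝔭` of a subset of `A`, inside `A`. -/
def localizeA (𝔭 : Ideal (𝓞 E)) (S : Set A) : Set A :=
  {a | ∃ s : 𝓞 E, s ∉ 𝔭 ∧ s • a ∈ S}

/-- Localization at the prime `𝔭` of a subset of `V`, inside `V`. -/
def localizeV (𝔭 : Ideal (𝓞 E)) (Y : Set V) : Set V :=
  {v | ∃ s : 𝓞 E, s ∉ 𝔭 ∧ s • v ∈ Y}

/-- `Y` is locally free of rank `d` over the order (given as the set `S`): at every nonzero
prime `𝔭` of `𝓞 E` the localization `Y_𝔭` is free of rank `d` over `S_𝔭`. -/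
def IsLocallyFreeOfRank (S : Set A) (Y : Set V) (d : ℕ) : Prop :=
  ∀ 𝔭 : Ideal (𝓞 E), 𝔭.IsPrime → 𝔭 ≠ ⊥ →
    IsFreeOfRank (localizeA 𝔭 S) (localizeV 𝔭 Y) d

/-- The `S`-span `S·Y` of a subset `Y ⊆ V`, for a set of scalars `S ⊆ A`:
all finite sums `∑ λᵢ • xᵢ` with `λᵢ ∈ S`, `xᵢ ∈ Y`. -/
def spanSet (S : Set A) (Y : Set V) : Set V :=
  {v | ∃ (m : ℕ) (lam : Fin m → A) (x : Fin m → V),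
    (∀ i, lam i ∈ S) ∧ (∀ i, x i ∈ Y) ∧ v = ∑ i, lam i • x i}

theorem Submodule.mem_of_forall_isMaximal_exists_smul_mem {R M : Type*} [CommRing R]
    [AddCommGroup M] [Module R M] {N : Submodule R M} {x : M}
    (h : ∀ 𝔪 : Ideal R, 𝔪.IsMaximal → ∃ s ∉ 𝔪, s • x ∈ N) : x ∈ N := by
  by_contra hx
  have hcolon : N.colon {x} ≠ ⊤ := fun htop =>
    hx (by simpa using mem_colon_singleton.mp (htop ▸ Submodule.mem_top : (1 : R) ∈ N.colon {x}))
  obtain ⟨𝔪, h𝔪, hle⟩ := Ideal.exists_le_maximal _ hcolon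
  obtain ⟨s, hs, hsx⟩ := h 𝔪 h𝔪
  exact hs (hle (mem_colon_singleton.mpr hsx))

theorem Submodule.mem_of_map_eq_of_apply_mem {R W : Type*} [CommRing R] [AddCommGroup W]
    [Module R W] {L N : Submodule R W} (hN : N.FG) {f : W →ₗ[R] W} (hfN : N.map f = N)
    (hfL : L.map f ≤ L) {x : W} (hx : x ∈ N) (hfx : f x ∈ L) : x ∈ L := by
  have : Module.Finite R N := Module.Finite.iff_fg.mpr hN
  let g : N →ₗ[R] N := f.restrict fun y hy => hfN ▸ mem_map_of_mem hy
  have hg : Function.Surjective g := fun ⟨y, hy⟩ => by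
    obtain ⟨z, hz, rfl⟩ := mem_map.mp (hfN.symm ▸ hy)
    exact ⟨⟨z, hz⟩, rfl⟩
  let L' := L.comap N.subtype
  let q := L'.mapQ L' g fun y hy => hfL (mem_map_of_mem hy)
  have hq : Function.Injective q := by
    refine OrzechProperty.injective_of_surjective_endomorphism q ?_
    rw [← LinearMap.range_eq_top, range_mapQ, LinearMap.range_eq_top.mpr hg, map_top, range_mkQ]
  have hqx : q (L'.mkQ ⟨x, hx⟩) = 0 := (Quotient.mk_eq_zero _).mpr hfx
  exact (Quotient.mk_eq_zero L').mp (hq (hqx.trans (map_zero q).symm))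

theorem sum_smul_sum_smul {A V m n : Type*} [Ring A] [AddCommGroup V] [Module A V]
    [Fintype m] [Fintype n] (x : m → A) (M : m → n → A) (v : n → V) :
    ∑ i, x i • ∑ j, M i j • v j = ∑ j, (∑ i, x i * M i j) • v j := by
  simp only [Finset.sum_smul, Finset.smul_sum, mul_smul]
  exact Finset.sum_comm

theorem exists_eq_sum_smul_of_mem_spanSet {R : Type*} [CommRing R] [Algebra R A]
    {T : Subalgebra R A} {M : Set A} (hM : M ⊆ T) {Y : Set V} {d : ℕ} {β : Fin d → V}
    (hY : ∀ y ∈ Y, ∃ μ : Fin d → A, (∀ j, μ j ∈ T) ∧ y = ∑ j, μ j • β j) {v : V}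
    (hv : v ∈ spanSet M Y) : ∃ lam : Fin d → A, (∀ j, lam j ∈ T) ∧ v = ∑ j, lam j • β j := by
  obtain ⟨m, c, y, hc, hy, rfl⟩ := hv
  choose μ hμ hyμ using fun k => hY (y k) (hy k)
  refine ⟨fun j => ∑ k, c k * μ k j,
    fun j => Subalgebra.sum_mem _ fun k _ => mul_mem (hM (hc k)) (hμ k j), ?_⟩
  simp only [hyμ, sum_smul_sum_smul]

theorem mem_spanSet_of_mem {M : Set A} (hM : (1 : A) ∈ M) {Y : Set V} {y : V} (hy : y ∈ Y) :
    y ∈ spanSet M Y :=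
  ⟨1, fun _ => 1, fun _ => y, fun _ => hM, fun _ => hy, by simp⟩

open Matrix in
theorem Matrix.mem_of_mul_eq_one {R A n : Type*} [CommRing R] [Ring A] [Algebra R A]
    [Fintype n] [DecidableEq n] {S T : Subalgebra R A} (hST : S ≤ T)
    (hT : (Subalgebra.toSubmodule T).FG) {B C : Matrix n n A} (hB : ∀ i j, B i j ∈ T)
    (hC : ∀ i j, C i j ∈ S) (hBC : B * C = 1) (i j : n) : B i j ∈ S := by
  let L : Submodule R (n → A) := Submodule.pi Set.univ fun _ => Subalgebra.toSubmodule S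
  let N : Submodule R (n → A) := Submodule.pi Set.univ fun _ => Subalgebra.toSubmodule T
  let f : (n → A) →ₗ[R] n → A :=
    { toFun := (· ᵥ* C)
      map_add' := fun x y => add_vecMul C x y
      map_smul' := fun r x => smul_vecMul r x C }
  have hfN : N.map f = N := by
    refine le_antisymm ?_ fun x hx => ?_
    · rintro _ ⟨x, hx, rfl⟩ k -
      exact Subalgebra.sum_mem _ fun l _ => mul_mem (hx l trivial) (hST (hC l k))
    · refine ⟨x ᵥ* B, fun k _ =>
        Subalgebra.sum_mem _ fun l _ => mul_mem (hx l trivial) (hB l k), ?_⟩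
      change x ᵥ* B ᵥ* C = x
      rw [vecMul_vecMul, hBC, vecMul_one]
  have hfL : L.map f ≤ L := by
    rintro _ ⟨x, hx, rfl⟩ k -
    exact Subalgebra.sum_mem _ fun l _ => mul_mem (hx l trivial) (hC l k)
  have hrow : f (B i) ∈ L := by
    intro k _
    change (B i ᵥ* C) k ∈ S
    rw [← mul_apply_eq_vecMul, hBC, one_apply]
    split_ifs
    exacts [one_mem S, zero_mem S]
  exact Submodule.mem_of_map_eq_of_apply_mem (Submodule.fg_pi fun _ => hT) hfN hfL
    (fun k _ => hB i k) hrow j trivial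

omit [NumberField E] in
theorem algebraOEA_smul_eq (r : 𝓞 E) (a : A) : r • a = (r : E) • a := by
  rw [Algebra.smul_def, Algebra.smul_def]
  rfl

theorem moduleOEV_smul_eq {W : Type*} [AddCommGroup W] [Module E W] (r : 𝓞 E) (w : W) :
    r • w = (r : E) • w :=
  rfl

/- `algebraOEA` is not syntactically Mathlib's `Algebra (𝓞 E) A`, so Mathlib's instance of this
tower does not apply to it. -/
instance : IsScalarTower (𝓞 E) E A :=
  ⟨fun r e a => by rw [algebraOEA_smul_eq, algebraOEA_smul_eq, smul_assoc]⟩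

section Localization

variable (𝔭 : Ideal (𝓞 E))

omit [NumberField E] in
theorem coe_ne_zero_of_notMem {s : 𝓞 E} (hs : s ∉ 𝔭) : (s : E) ≠ 0 := by
  rw [Ne, NumberField.RingOfIntegers.coe_eq_zero_iff]
  rintro rfl
  exact hs 𝔭.zero_mem

theorem localizeV_mono {X Y : Set V} (h : Y ⊆ X) : localizeV 𝔭 Y ⊆ localizeV 𝔭 X :=
  fun _ ⟨s, hs, hsv⟩ => ⟨s, hs, h hsv⟩

variable [𝔭.IsPrime]

theorem subset_localizeV (Y : Set V) : Y ⊆ localizeV 𝔭 Y :=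
  fun _ hv => ⟨1, 𝔭.one_notMem, by rwa [one_smul]⟩

noncomputable def localizedSubalgebra (𝒜 : Subalgebra (𝓞 E) A) : Subalgebra (𝓞 E) A where
  carrier := localizeA 𝔭 𝒜
  mul_mem' := by
    rintro a b ⟨s, hs, hsa⟩ ⟨t, ht, htb⟩
    refine ⟨s * t, Ideal.IsPrime.mul_notMem ‹_› hs ht, ?_⟩
    rw [← smul_mul_smul_comm]
    exact mul_mem hsa htb
  add_mem' := by
    rintro a b ⟨s, hs, hsa⟩ ⟨t, ht, htb⟩
    refine ⟨s * t, Ideal.IsPrime.mul_notMem ‹_› hs ht, ?_⟩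
    rw [smul_add, mul_comm, mul_smul, mul_comm, mul_smul]
    exact add_mem (𝒜.smul_mem hsa t) (𝒜.smul_mem htb s)
  algebraMap_mem' r := ⟨1, 𝔭.one_notMem, by rw [one_smul]; exact 𝒜.algebraMap_mem r⟩

/-- The localization `𝓞_𝔭`, realized inside `E` so that it acts on `A` through `E`. -/
noncomputable abbrev localRingOfIntegers : Subalgebra (𝓞 E) E :=
  localizedSubalgebra 𝔭 ⊥

omit [NumberField E] in
theorem inv_mem_localRingOfIntegers {s : 𝓞 E} (hs : s ∉ 𝔭) :
    (s : E)⁻¹ ∈ localRingOfIntegers 𝔭 := by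
  refine ⟨s, hs, 1, ?_⟩
  rw [algebraOEA_smul_eq, smul_eq_mul, mul_inv_cancel₀ (coe_ne_zero_of_notMem 𝔭 hs), map_one]

noncomputable def localizedOrder (𝒜 : Subalgebra (𝓞 E) A) :
    Subalgebra (localRingOfIntegers 𝔭) A :=
  { (localizedSubalgebra 𝔭 𝒜).toSubsemiring with
    algebraMap_mem' := by
      rintro ⟨r, s, hs, u, hu⟩
      refine ⟨s, hs, ?_⟩
      have hsr : s • algebraMap E A r = algebraMap E A (s • r) := by
        rw [algebraOEA_smul_eq, algebraOEA_smul_eq, Algebra.smul_def, Algebra.smul_def, map_mul]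
        rfl
      change s • algebraMap E A r ∈ 𝒜
      rw [hsr, ← hu]
      exact 𝒜.algebraMap_mem u }

omit [NumberField E] in
theorem mem_localizedOrder_of_mem {𝒜 : Subalgebra (𝓞 E) A} {a : A} (ha : a ∈ 𝒜) :
    a ∈ localizedOrder 𝔭 𝒜 :=
  ⟨1, 𝔭.one_notMem, by rwa [one_smul]⟩

omit [NumberField E] in
theorem localizedOrder_mono {𝒜 ℳ : Subalgebra (𝓞 E) A} (h : 𝒜 ≤ ℳ) :
    localizedOrder 𝔭 𝒜 ≤ localizedOrder 𝔭 ℳ :=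
  fun _ ⟨s, hs, hsa⟩ => ⟨s, hs, h hsa⟩

omit [NumberField E] in
theorem localizedOrder_fg {ℳ : Subalgebra (𝓞 E) A} (hℳ : (Subalgebra.toSubmodule ℳ).FG) :
    (Subalgebra.toSubmodule (localizedOrder 𝔭 ℳ)).FG := by
  obtain ⟨G, hG⟩ := hℳ
  refine ⟨G, le_antisymm (Submodule.span_le.mpr fun g hg => ?_) fun a ⟨s, hs, hsa⟩ => ?_⟩
  · exact mem_localizedOrder_of_mem 𝔭 (hG ▸ Submodule.subset_span hg : g ∈ ℳ.toSubmodule)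
  · have hsa' : s • a ∈ Submodule.span (localRingOfIntegers 𝔭) (G : Set A) :=
      Submodule.span_le_restrictScalars (𝓞 E) _ _ (hG ▸ hsa)
    have := Submodule.smul_mem _
      (⟨_, inv_mem_localRingOfIntegers 𝔭 hs⟩ : localRingOfIntegers 𝔭) hsa'
    rwa [Subalgebra.smul_def, algebraOEA_smul_eq,
      inv_smul_smul₀ (coe_ne_zero_of_notMem 𝔭 hs)] at this

end Localization

theorem exists_ne_zero_mul_eq_coe (e : E) : ∃ t u : 𝓞 E, t ≠ 0 ∧ (t : E) * e = u := by
  have he : IsAlgebraic ℤ e := (IsFractionRing.isAlgebraic_iff ℤ ℚ E).mpr (.of_finite ℚ e)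
  obtain ⟨n, hn, hne⟩ := he.exists_integral_multiple
  exact ⟨n, ⟨n • e, hne⟩, by exact_mod_cast hn, by simp [zsmul_eq_mul]⟩

theorem exists_ne_zero_smul_mem {𝒜 : Subalgebra (𝓞 E) A}
    (h𝒜 : Submodule.span E (𝒜 : Set A) = ⊤) (a : A) : ∃ s : 𝓞 E, s ≠ 0 ∧ s • a ∈ 𝒜 := by
  induction h𝒜 ▸ Submodule.mem_top (x := a) using Submodule.span_induction with
  | mem x hx => exact ⟨1, one_ne_zero, by rwa [one_smul]⟩
  | zero => exact ⟨1, one_ne_zero, by rw [smul_zero]; exact zero_mem 𝒜⟩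
  | add x y _ _ hx hy =>
    obtain ⟨s, hs, hsx⟩ := hx
    obtain ⟨t, ht, hty⟩ := hy
    refine ⟨t * s, mul_ne_zero ht hs, ?_⟩
    rw [smul_add, mul_smul, mul_comm, mul_smul]
    exact add_mem (𝒜.smul_mem hsx t) (𝒜.smul_mem hty s)
  | smul e x _ hx =>
    obtain ⟨s, hs, hsx⟩ := hx
    obtain ⟨t, u, ht, htu⟩ := exists_ne_zero_mul_eq_coe e
    refine ⟨t * s, mul_ne_zero ht hs, ?_⟩
    have : (t * s) • e • x = u • s • x := by
      simp only [algebraOEA_smul_eq, smul_smul, ← htu]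
      congr 1
      push_cast
      ring
    rw [this]
    exact 𝒜.smul_mem hsx u

theorem exists_ne_zero_forall_smul_mem {𝒜 : Subalgebra (𝓞 E) A}
    (h𝒜 : Submodule.span E (𝒜 : Set A) = ⊤) {ι : Type*} [Fintype ι] (f : ι → A) :
    ∃ s : 𝓞 E, s ≠ 0 ∧ ∀ i, s • f i ∈ 𝒜 := by
  classical
  choose s hs hsf using fun i => exists_ne_zero_smul_mem h𝒜 (f i)
  refine ⟨∏ i, s i, Finset.prod_ne_zero_iff.mpr fun i _ => hs i, fun i => ?_⟩
  rw [← Finset.mul_prod_erase _ _ (Finset.mem_univ i), mul_comm, mul_smul]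
  exact 𝒜.smul_mem (hsf i) _

theorem eq_of_sum_smul_eq_sum_smul {𝒜 : Subalgebra (𝓞 E) A}
    (h𝒜 : Submodule.span E (𝒜 : Set A) = ⊤) {ι : Type*} [Fintype ι] {α : ι → V}
    (hα : ∀ lam : ι → A, (∀ i, lam i ∈ 𝒜) → ∑ i, lam i • α i = 0 → ∀ i, lam i = 0)
    {lam lam' : ι → A} (h : ∑ i, lam i • α i = ∑ i, lam' i • α i) : lam = lam' := by
  obtain ⟨s, hs, hsmem⟩ := exists_ne_zero_forall_smul_mem h𝒜 (lam - lam')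
  have hsum : ∑ i, (s • (lam - lam') i) • α i = 0 := by
    simp only [algebraOEA_smul_eq, smul_assoc, ← Finset.smul_sum, Pi.sub_apply, sub_smul,
      Finset.sum_sub_distrib, h, sub_self, smul_zero]
  funext i
  have := hα _ hsmem hsum i
  rw [algebraOEA_smul_eq] at this
  exact sub_eq_zero.mp ((smul_eq_zero.mp this).resolve_left (by exact_mod_cast hs))

theorem subset_localizeV_of_isFreeOfRank (𝔭 : Ideal (𝓞 E)) [𝔭.IsPrime]
    {𝒜 ℳ : Subalgebra (𝓞 E) A} (h𝒜 : Submodule.span E (𝒜 : Set A) = ⊤)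
    (hℳ : (Subalgebra.toSubmodule ℳ).FG) (h𝒜ℳ : 𝒜 ≤ ℳ) {X Y : Submodule (𝓞 E) V} (hYX : Y ≤ X)
    (hMXY : spanSet (ℳ : Set A) (Y : Set V) = spanSet (ℳ : Set A) (X : Set V)) {d : ℕ}
    (hX : IsFreeOfRank (localizeA 𝔭 (𝒜 : Set A)) (localizeV 𝔭 (X : Set V)) d)
    (hY : IsFreeOfRank (localizeA 𝔭 (𝒜 : Set A)) (localizeV 𝔭 (Y : Set V)) d) :
    (X : Set V) ⊆ localizeV 𝔭 (Y : Set V) := by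
  obtain ⟨α, hαX, -, hα_repr, hα_indep⟩ := hX
  obtain ⟨β, hβY, hβ_sum, hβ_repr, -⟩ := hY
  have hST := localizedOrder_mono 𝔭 h𝒜ℳ
  choose C hC hβα using fun j => hα_repr (β j) (localizeV_mono 𝔭 hYX (hβY j))
  have hαβ : ∀ i, ∃ b : Fin d → A, (∀ j, b j ∈ localizedOrder 𝔭 ℳ) ∧ α i = ∑ j, b j • β j := by
    intro i
    obtain ⟨s, hs, hsα⟩ := hαX i
    obtain ⟨c, hc, hsαc⟩ := exists_eq_sum_smul_of_mem_spanSet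
      (fun _ => mem_localizedOrder_of_mem 𝔭)
      (fun y hy => (hβ_repr y (subset_localizeV 𝔭 _ hy)).imp fun _ hμ =>
        ⟨fun j => hST (hμ.1 j), hμ.2⟩)
      (hMXY ▸ mem_spanSet_of_mem ℳ.one_mem hsα)
    refine ⟨fun j => (⟨_, inv_mem_localRingOfIntegers 𝔭 hs⟩ : localRingOfIntegers 𝔭) • c j,
      fun j => Subalgebra.smul_mem _ (hc j) _, ?_⟩
    simp only [Subalgebra.smul_def, smul_assoc, ← Finset.smul_sum, ← hsαc, moduleOEV_smul_eq]
    rw [inv_smul_smul₀ (coe_ne_zero_of_notMem 𝔭 hs)]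
  choose B hB hαβ using hαβ
  have hBC : Matrix.of B * Matrix.of C = 1 := by
    ext i k
    refine congrFun (eq_of_sum_smul_eq_sum_smul h𝒜
      (fun lam hlam => hα_indep lam fun i => mem_localizedOrder_of_mem 𝔭 (hlam i)) ?_) k
    rw [show ∑ k, (1 : Matrix (Fin d) (Fin d) A) i k • α k = α i by simp [Matrix.one_apply],
      hαβ i]
    simp only [Matrix.mul_apply, Matrix.of_apply, hβα, sum_smul_sum_smul]
  have hBS := Matrix.mem_of_mul_eq_one hST (localizedOrder_fg 𝔭 hℳ) hB (fun j k => hC j k) hBC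
  intro x hx
  obtain ⟨lam, hlam, rfl⟩ := hα_repr x (subset_localizeV 𝔭 _ hx)
  simp only [hαβ, sum_smul_sum_smul]
  exact hβ_sum _ fun j => Subalgebra.sum_mem _ fun i _ => mul_mem (hlam i) (hBS i j)

theorem sub_lattice_eq_of_maxOrder_span_eq
    (𝒜 ℳ : Subalgebra (𝓞 E) A) (h𝒜 : IsOrder 𝒜) (hℳ : IsOrder ℳ) (h𝒜ℳ : 𝒜 ≤ ℳ)
    (X Y : Submodule (𝓞 E) V) (hYX : Y ≤ X)
    (d : ℕ)
    (hlfX : IsLocallyFreeOfRank (E := E) (𝒜 : Set A) (X : Set V) d)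
    (hlfY : IsLocallyFreeOfRank (E := E) (𝒜 : Set A) (Y : Set V) d)
    (hMXY : spanSet (ℳ : Set A) (Y : Set V) = spanSet (ℳ : Set A) (X : Set V)) :
    Y = X := by
  refine le_antisymm hYX fun x hx =>
    Submodule.mem_of_forall_isMaximal_exists_smul_mem fun 𝔪 h𝔪 => ?_
  have h𝔪p := h𝔪.isPrime
  have h𝔪0 : 𝔪 ≠ ⊥ :=
    Ring.ne_bot_of_isMaximal_of_not_isField h𝔪 (NumberField.RingOfIntegers.not_isField E)
  exact subset_localizeV_of_isFreeOfRank 𝔪 h𝒜.2 hℳ.1 h𝒜ℳ hYX hMXY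
    (hlfX 𝔪 h𝔪p h𝔪0) (hlfY 𝔪 h𝔪p h𝔪0) hx

end
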